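/- For any DAG G, if the 1-influential set {i_1, …, i_m} (ordered by decreasing rank) has m > 1 elements, then for every t with 1 < t ≤ m, 2·|P(i_t)| ≥ |P(i_1)|, where P denotes progeny in G. -/

import Mathlib

/-!
Let `i` be 1-influential and `j` any node. A path into `j` either avoids the out-edges of `i`,
or passes through `i`; hence `P(j) ⊆ P'(j) ∪ P(i)`, where `P'` is progeny after `i` deletes its
out-edges. Acyclicity makes that deletion leave `P(i)` unchanged, and since nobody outranks `i`
afterwards, `|P'(j)| ≤ |P(i)|`. So `|P(j)| ≤ 2 |P(i)|`, in particular for `j = i₁`.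
-/

attribute [local instance] Classical.propDecidable

/-- The progeny of node `i`: all nodes with a directed path to `i`, including `i`. -/
noncomputable def progeny {n : ℕ} (E : Finset (Fin n × Fin n)) (i : Fin n) : Finset (Fin n) :=
  Finset.univ.filter (fun j => Relation.ReflTransGen (fun u v => (u, v) ∈ E) j i)

/-- The graph is acyclic. -/
def Acyclic {n : ℕ} (E : Finset (Fin n × Fin n)) : Prop :=
  ∀ i : Fin n, ¬ Relation.TransGen (fun u v => (u, v) ∈ E) i i

/-- `Prec E i j` means `i ≻ j` : larger progeny, ties broken by larger index. -/
def Prec {n : ℕ} (E : Finset (Fin n × Fin n)) (i j : Fin n) : Prop :=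
  (progeny E j).card < (progeny E i).card ∨
    ((progeny E j).card = (progeny E i).card ∧ j < i)

/-- Delete all out-edges of node `i`. -/
noncomputable def delOut {n : ℕ} (E : Finset (Fin n × Fin n)) (i : Fin n) :
    Finset (Fin n × Fin n) := E.filter (fun e => e.1 ≠ i)

/-- `i` is in the `k`-influential set: fewer than `k` nodes outrank `i`
after `i` deletes all her out-edges. -/
noncomputable def Influential {n : ℕ} (k : ℕ) (E : Finset (Fin n × Fin n)) (i : Fin n) : Prop :=
  (Finset.univ.filter (fun j => Prec (delOut E i) j i)).card < k

lemma progeny_delOut_self {n : ℕ} {E : Finset (Fin n × Fin n)} (hE : Acyclic E) (i : Fin n) :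
    progeny (delOut E i) i = progeny E i := by
  ext j
  simp only [progeny, Finset.mem_filter, Finset.mem_univ, true_and]
  refine ⟨Relation.ReflTransGen.mono (fun u v huv => (Finset.mem_filter.mp huv).1) j i, fun h => ?_⟩
  induction h using Relation.ReflTransGen.head_induction_on with
  | refl => exact .refl
  | @head a b hab hbi ih =>
    have ha : a ≠ i := by
      rintro rfl
      exact hE a (.head' hab hbi)
    exact .head (by simp [delOut, hab, ha]) ih

lemma progeny_subset_progeny_delOut_union {n : ℕ} (E : Finset (Fin n × Fin n)) (i j : Fin n) :
    progeny E j ⊆ progeny (delOut E i) j ∪ progeny E i := by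
  intro x hx
  simp only [progeny, Finset.mem_filter, Finset.mem_univ, true_and, Finset.mem_union] at hx ⊢
  induction hx using Relation.ReflTransGen.head_induction_on with
  | refl => exact .inl .refl
  | @head a b hab _ ih =>
    by_cases ha : a = i
    · exact .inr (ha ▸ .refl)
    · exact ih.imp (.head (by simp [delOut, hab, ha])) (.head hab)

lemma card_progeny_le_of_not_prec {n : ℕ} {E : Finset (Fin n × Fin n)} {i j : Fin n}
    (h : ¬ Prec E j i) : (progeny E j).card ≤ (progeny E i).card := by
  unfold Prec at h
  omega

lemma Influential.not_prec_delOut {n : ℕ} {E : Finset (Fin n × Fin n)} {i : Fin n}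
    (hi : Influential 1 E i) (j : Fin n) : ¬ Prec (delOut E i) j i := by
  intro hj
  have : (Finset.univ.filter (fun j => Prec (delOut E i) j i)).Nonempty := ⟨j, by simp [hj]⟩
  exact this.card_pos.ne' (Nat.lt_one_iff.mp hi)

theorem Influential.card_progeny_le_two_mul {n : ℕ} {E : Finset (Fin n × Fin n)}
    (hE : Acyclic E) {i : Fin n} (hi : Influential 1 E i) (j : Fin n) :
    (progeny E j).card ≤ 2 * (progeny E i).card := by
  have hdel : (progeny (delOut E i) j).card ≤ (progeny E i).card := by
    simpa only [progeny_delOut_self hE] using card_progeny_le_of_not_prec (hi.not_prec_delOut j)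
  calc (progeny E j).card
      ≤ (progeny (delOut E i) j ∪ progeny E i).card :=
        Finset.card_le_card (progeny_subset_progeny_delOut_union E i j)
    _ ≤ (progeny (delOut E i) j).card + (progeny E i).card := Finset.card_union_le _ _
    _ ≤ 2 * (progeny E i).card := by omega

/-- if the 1-influential set, ordered decreasingly, has m > 1 elements,
then every non-first element i_t satisfies 2·|P(i_t)| ≥ |P(i₁)|. -/
theorem stmt1 {n m : ℕ} (E : Finset (Fin n × Fin n)) (hE : Acyclic E) (hm : 1 < m)
    (f : Fin m → Fin n)
    (henum : ∀ i : Fin n, Influential 1 E i ↔ ∃ t : Fin m, f t = i) :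
    ∀ t : Fin m, 0 < (t : ℕ) →
      (progeny E (f ⟨0, by omega⟩)).card ≤ 2 * (progeny E (f t)).card := by
  intro t _
  exact ((henum (f t)).mpr ⟨t, rfl⟩).card_progeny_le_two_mul hE _
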